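/- Let J = I_{(d; a_1,...,a_n)} and L = I_{(d; b_1,...,b_n)} be Veronese type ideals of the same degree d with J ⊆ L. Then J can be extended by linear quotients to L. -/

import Mathlib

/-- A monomial in `K[x_1,...,x_n]` is identified with its exponent vector. -/
abbrev Mon (n : ℕ) := Fin n → ℕ

/-- Total degree of a monomial. -/
def degree {n : ℕ} (u : Mon n) : ℕ := ∑ i, u i

/-- A monomial ideal is identified with the set of exponent vectors of the monomials it
contains; this set is closed under multiplication by monomials. -/
def IsMonomialIdeal {n : ℕ} (I : Set (Mon n)) : Prop :=
  ∀ u ∈ I, ∀ w : Mon n, u + w ∈ I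

/-- The minimal monomial generating set `G(I)` of a monomial ideal: monomials of `I`
minimal with respect to divisibility (pointwise `≤` of exponent vectors). -/
def minGens {n : ℕ} (I : Set (Mon n)) : Set (Mon n) :=
  {u | u ∈ I ∧ ∀ v ∈ I, v ≤ u → v = u}

/-- `exch v i j` is the exponent vector of `x_j * (v / x_i)` (for `i ≠ j`). -/
def exch {n : ℕ} (v : Mon n) (i j : Fin n) : Mon n :=
  fun k => if k = i then v k - 1 else if k = j then v k + 1 else v k

/-- `component I d` is the ideal `I_⟨d⟩` generated by the degree-`d` monomials of `I`. -/
def component {n : ℕ} (I : Set (Mon n)) (d : ℕ) : Set (Mon n) :=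
  {w | ∃ u ∈ I, degree u = d ∧ u ≤ w}

/-- `I` is generated in a single degree. -/
def GeneratedInSingleDegree {n : ℕ} (I : Set (Mon n)) : Prop :=
  ∃ d, ∀ u ∈ minGens I, degree u = d

/-- A polymatroidal ideal: generated in a single degree and its generators satisfy the
exchange property. -/
def IsPolymatroidal {n : ℕ} (I : Set (Mon n)) : Prop :=
  GeneratedInSingleDegree I ∧
  ∀ u ∈ minGens I, ∀ v ∈ minGens I, ∀ i : Fin n, v i < u i →
    ∃ j : Fin n, u j < v j ∧ exch u i j ∈ I

/-- Componentwise polymatroidal: each graded component ideal `I_⟨d⟩` is polymatroidal. -/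
def ComponentwisePolymatroidal {n : ℕ} (I : Set (Mon n)) : Prop :=
  ∀ d : ℕ, IsPolymatroidal (component I d)

/-- Non-pure dual exchange property: for `u, v ∈ G(I)` with `deg u ≤ deg v` and
`deg_{x_i} v < deg_{x_i} u` there is `j` with `deg_{x_j} v > deg_{x_j} u` and
`x_i * (v / x_j) ∈ I`. -/
def NonPureDualExchange {n : ℕ} (I : Set (Mon n)) : Prop :=
  ∀ u ∈ minGens I, ∀ v ∈ minGens I, degree u ≤ degree v →
    ∀ i : Fin n, v i < u i → ∃ j : Fin n, u j < v j ∧ exch v j i ∈ I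

/-- Non-pure exchange property: for `u, v ∈ G(I)` with `deg u ≤ deg v` and
`deg_{x_i} v > deg_{x_i} u` there is `j` with `deg_{x_j} v < deg_{x_j} u` and
`x_j * (v / x_i) ∈ I`. -/
def NonPureExchange {n : ℕ} (I : Set (Mon n)) : Prop :=
  ∀ u ∈ minGens I, ∀ v ∈ minGens I, degree u ≤ degree v →
    ∀ i : Fin n, u i < v i → ∃ j : Fin n, v j < u j ∧ exch v i j ∈ I

/-- The monomial ideal generated by a set `G` of monomials. -/
def genBy {n : ℕ} (G : Set (Mon n)) : Set (Mon n) := {w | ∃ u ∈ G, u ≤ w}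

/-- The product of two monomial ideals (as sets of monomials). -/
def mulIdeal {n : ℕ} (I J : Set (Mon n)) : Set (Mon n) :=
  {w | ∃ u ∈ I, ∃ v ∈ J, w = u + v}

/-- The product of a monomial ideal with the monomial `u`. -/
def mulMon {n : ℕ} (u : Mon n) (I : Set (Mon n)) : Set (Mon n) :=
  (fun v => u + v) '' I

/-- Strong exchange property: for all generators `u, v` and all `i, j` with
`deg_{x_i} u > deg_{x_i} v` and `deg_{x_j} u < deg_{x_j} v`, `x_j * (u / x_i) ∈ I`. -/
def StrongExchange {n : ℕ} (I : Set (Mon n)) : Prop :=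
  ∀ u ∈ minGens I, ∀ v ∈ minGens I, ∀ i j : Fin n,
    v i < u i → u j < v j → exch u i j ∈ I

/-- The Veronese type ideal `I_{(d; a_1,...,a_n)}`: generated by all monomials of
degree `d` with `deg_{x_i} ≤ a i` for all `i`. -/
def veronese (n d : ℕ) (a : Fin n → ℕ) : Set (Mon n) :=
  {w | ∃ u : Mon n, degree u = d ∧ (∀ i, u i ≤ a i) ∧ u ≤ w}

/-- A list of monomials is an admissible order if each colon ideal
`(u_1,...,u_{i-1}) : u_i` is generated by a subset `S` of the variables. -/
def AdmissibleOrder {n : ℕ} (L : List (Mon n)) : Prop :=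
  ∀ i : Fin L.length, ∃ S : Set (Fin n),
    ∀ w : Mon n, (w + L.get i ∈ genBy {u | u ∈ L.take i.1}) ↔ ∃ k ∈ S, 1 ≤ w k

/-- `I` has linear quotients: some ordering of `G(I)` is admissible. -/
def HasLinearQuotients {n : ℕ} (I : Set (Mon n)) : Prop :=
  ∃ L : List (Mon n), L.Nodup ∧ (∀ u, u ∈ L ↔ u ∈ minGens I) ∧ AdmissibleOrder L

/-- `I` can be extended by linear quotients to `J`: `G(I) ⊆ G(J)` and the elements of
`G(J) \ G(I)` can be ordered `v_1,...,v_m` such that each colon ideal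
`(G(I), v_1,...,v_i) : v_{i+1}` is generated by a subset of the variables. -/
def ExtendsByLinearQuotients {n : ℕ} (I J : Set (Mon n)) : Prop :=
  I ⊆ J ∧ minGens I ⊆ minGens J ∧
  ∃ L : List (Mon n), L.Nodup ∧ (∀ u, u ∈ L ↔ u ∈ minGens J ∧ u ∉ minGens I) ∧
    ∀ i : Fin L.length, ∃ S : Set (Fin n),
      ∀ w : Mon n,
        (w + L.get i ∈ genBy (minGens I ∪ {u | u ∈ L.take i.1})) ↔ ∃ k ∈ S, 1 ≤ w k

/-- The minimal generators of `I ⊆ K[x,y]` are `u_i = x^{a i} y^{b i}`, `i = 0,...,m`,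
with `a` strictly decreasing, `b` strictly increasing, `a m = 0` and `b 0 = 0`
(so `I` is `(x,y)`-primary). -/
def yxTightGens (m : ℕ) (a b : ℕ → ℕ) (I : Set (Mon 2)) : Prop :=
  (∀ i k : ℕ, i ≤ m → k ≤ m → i < k → a k < a i ∧ b i < b k) ∧
  a m = 0 ∧ b 0 = 0 ∧
  minGens I = {u | ∃ i ≤ m, u = ![a i, b i]}

/-- `I` is `x`-tight in `[0, r]`: the `x`-exponents of the generators are exactly
`r, r-1, ..., 1, 0` (i.e. `a (r - i) = i`). -/
def xTight (I : Set (Mon 2)) (r : ℕ) : Prop :=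
  ∃ b : ℕ → ℕ, yxTightGens r (fun i => r - i) b I

/-- `I` is `y`-tight in `[0, s]`: the `y`-exponents of the generators are exactly
`0, 1, ..., s`. -/
def yTight (I : Set (Mon 2)) (s : ℕ) : Prop :=
  ∃ a : ℕ → ℕ, yxTightGens s a (fun i => i) I

/-- `I` is `yx`-tight: there is `0 ≤ j ≤ m` with `b i = i` for `i = 0,...,j` and
`a (m - i) = i` for `i = 0,...,m-j`. -/
def yxTight (I : Set (Mon 2)) : Prop :=
  ∃ (m : ℕ) (a b : ℕ → ℕ), yxTightGens m a b I ∧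
    ∃ j ≤ m, (∀ i ≤ j, b i = i) ∧ ∀ i ≤ m - j, a (m - i) = i

/-- Powers of a monomial ideal. -/
def powIdeal {n : ℕ} (I : Set (Mon n)) : ℕ → Set (Mon n)
  | 0 => Set.univ
  | k + 1 => mulIdeal (powIdeal I k) I

/-
The generators of `I_{(d;b)}` not in `I_{(d;a)}` are added in order of increasing excess
`∑ (u_i - a_i)₊` over the bound `a`, ties broken by decreasing lexicographic order. If an
earlier generator `u` divides `w v`, pick `k` with `v_k < u_k` (so `x_k ∣ w`); moving one
unit of `v` from a coordinate `t` exceeding `a` to `k` gives an earlier generator dividing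
`x_k v`. If some such `k` has `v_k < a_k`, the excess drops. Otherwise the excesses of `u` and
`v` must agree, and taking `k` the first coordinate where `u` and `v` differ forces a later
coordinate `t` with `v_t > a_t`, so the move is a lexicographic increase.
-/

theorem List.SortedLT.mem_take_iff {α : Type*} [Preorder α] {l : List α} (hl : l.SortedLT)
    (i : Fin l.length) {u : α} : u ∈ l.take i ↔ u ∈ l ∧ u < l.get i := by
  rw [List.mem_take_iff_getElem, List.mem_iff_getElem, List.get_eq_getElem]
  constructor
  · rintro ⟨j, hj, rfl⟩
    rw [lt_min_iff] at hj
    exact ⟨⟨j, hj.2, rfl⟩, hl.getElem_lt_getElem_of_lt hj.1⟩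
  · rintro ⟨⟨j, hj, rfl⟩, hlt⟩
    refine ⟨j, lt_min ?_ hj, rfl⟩
    by_contra! hij
    exact not_le_of_gt hlt (hl.sortedLE.getElem_le_getElem_of_le hij)

theorem Finset.exists_list_take_eq_key_lt {β α : Type*} [LinearOrder α] {key : β → α}
    (hkey : Function.Injective key) (s : Finset β) :
    ∃ L : List β, L.Nodup ∧ (∀ u, u ∈ L ↔ u ∈ s) ∧
      ∀ (i : Fin L.length) (u : β), u ∈ L.take i ↔ u ∈ s ∧ key u < key (L.get i) := by
  let _ : LinearOrder β := LinearOrder.lift' key hkey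
  have hsorted := Finset.sortedLT_sort s
  exact ⟨s.sort, hsorted.nodup, fun u => Finset.mem_sort _, fun i u =>
    (hsorted.mem_take_iff i).trans (and_congr_left' (Finset.mem_sort _))⟩

section MonomialIdeals

variable {n : ℕ}

theorem degree_mono {u v : Mon n} (h : u ≤ v) : degree u ≤ degree v :=
  Finset.sum_le_sum fun i _ => h i

theorem eq_of_le_of_degree_le {u v : Mon n} (h : u ≤ v) (hd : degree v ≤ degree u) :
    u = v := by
  by_contra hne
  obtain ⟨i, hi⟩ : ∃ i, u i < v i := by
    by_contra! hc
    exact hne (le_antisymm h hc)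
  have : degree u < degree v :=
    Finset.sum_lt_sum (fun j _ => h j) ⟨i, Finset.mem_univ i, hi⟩
  omega

theorem mem_genBy_of_le {G : Set (Mon n)} {u u' : Mon n} (hu : u ∈ genBy G) (h : u ≤ u') :
    u' ∈ genBy G :=
  let ⟨g, hg, hgu⟩ := hu
  ⟨g, hg, hgu.trans h⟩

theorem exists_colon_eq_variables {G : Set (Mon n)} {v : Mon n}
    (h : ∀ w, w + v ∈ genBy G → ∃ k, 1 ≤ w k ∧ Pi.single k 1 + v ∈ genBy G) :
    ∃ S : Set (Fin n), ∀ w, w + v ∈ genBy G ↔ ∃ k ∈ S, 1 ≤ w k := by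
  refine ⟨{k | Pi.single k 1 + v ∈ genBy G}, fun w => ⟨fun hw => (h w hw).imp fun _ hk => ⟨hk.2, hk.1⟩, ?_⟩⟩
  rintro ⟨k, hk, hwk⟩
  refine mem_genBy_of_le hk (add_le_add_left (fun i => ?_) v)
  rcases eq_or_ne i k with rfl | hik
  · simpa using hwk
  · simp [hik]

theorem extendsByLinearQuotients_of_key {I J : Set (Mon n)} {α : Type*} [LinearOrder α]
    (key : Mon n → α) (hkey : Function.Injective key) (hIJ : I ⊆ J)
    (hG : minGens I ⊆ minGens J) (hfin : (minGens J \ minGens I).Finite)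
    (hlow : ∀ u ∈ minGens I, ∀ v ∈ minGens J \ minGens I, key u < key v)
    (hcolon : ∀ v ∈ minGens J \ minGens I, ∀ w,
      w + v ∈ genBy {u | u ∈ minGens J ∧ key u < key v} →
        ∃ k, 1 ≤ w k ∧ Pi.single k 1 + v ∈ genBy {u | u ∈ minGens J ∧ key u < key v}) :
    ExtendsByLinearQuotients I J := by
  obtain ⟨L, hnodup, hmem, htake⟩ := hfin.toFinset.exists_list_take_eq_key_lt hkey
  refine ⟨hIJ, hG, L, hnodup, fun u => (hmem u).trans hfin.mem_toFinset, fun i => ?_⟩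
  have hv : L.get i ∈ minGens J \ minGens I := hfin.mem_toFinset.1 ((hmem _).1 (L.get_mem i))
  have hprev : minGens I ∪ {u | u ∈ L.take i.1} =
      {u | u ∈ minGens J ∧ key u < key (L.get i)} := by
    ext u
    simp only [Set.mem_union, Set.mem_ofPred_eq, htake, Set.Finite.mem_toFinset]
    constructor
    · rintro (hu | ⟨hu, hlt⟩)
      · exact ⟨hG hu, hlow u hu _ hv⟩
      · exact ⟨hu.1, hlt⟩
    · rintro ⟨hu, hlt⟩
      by_cases huI : u ∈ minGens I
      · exact Or.inl huI
      · exact Or.inr ⟨⟨hu, huI⟩, hlt⟩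
  rw [hprev]
  exact exists_colon_eq_variables (hcolon _ hv)

theorem sum_exch (f : Fin n → ℕ → ℕ) {v : Mon n} {i j : Fin n} (hij : i ≠ j) :
    ∑ k, f k (exch v i j k) + f i (v i) + f j (v j) =
      ∑ k, f k (v k) + f i (v i - 1) + f j (v j + 1) := by
  have hj : j ∈ Finset.univ.erase i := Finset.mem_erase.2 ⟨hij.symm, Finset.mem_univ j⟩
  simp only [← Finset.add_sum_erase _ _ (Finset.mem_univ i), ← Finset.add_sum_erase _ _ hj]
  have hrest : ∑ k ∈ (Finset.univ.erase i).erase j, f k (exch v i j k) =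
      ∑ k ∈ (Finset.univ.erase i).erase j, f k (v k) := by
    refine Finset.sum_congr rfl fun k hk => ?_
    simp only [Finset.mem_erase] at hk
    simp [exch, hk.1, hk.2.1]
  rw [hrest]
  simp [exch, hij.symm]
  ring

theorem degree_exch {v : Mon n} {i j : Fin n} (hij : i ≠ j) (hv : 1 ≤ v i) :
    degree (exch v i j) = degree v := by
  have := sum_exch (fun _ x => x) (v := v) hij
  simp only [degree] at this ⊢
  omega

theorem exch_le_single_add (v : Mon n) (i j : Fin n) : exch v i j ≤ Pi.single j 1 + v := by
  intro k
  simp only [exch, Pi.add_apply, Pi.single_apply]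
  split_ifs <;> omega

end MonomialIdeals

section VeroneseType

variable {n : ℕ}

theorem minGens_veronese (d : ℕ) (c : Mon n) :
    minGens (veronese n d c) = {u | degree u = d ∧ u ≤ c} := by
  ext u
  constructor
  · rintro ⟨⟨u', hdeg, hcap, hle⟩, hmin⟩
    obtain rfl : u' = u := hmin u' ⟨u', hdeg, hcap, le_rfl⟩ hle
    exact ⟨hdeg, hcap⟩
  · rintro ⟨hdeg, hcap⟩
    refine ⟨⟨u, hdeg, hcap, le_rfl⟩, ?_⟩
    rintro v ⟨u', hd', -, hle'⟩ hvu
    obtain rfl : u' = v := eq_of_le_of_degree_le hle' (hd' ▸ hdeg ▸ degree_mono hvu)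
    exact eq_of_le_of_degree_le hvu (by rw [hdeg, hd'])

theorem finite_minGens_veronese (d : ℕ) (c : Mon n) : (minGens (veronese n d c)).Finite := by
  refine (Set.Finite.pi fun i => Set.finite_Iic (c i)).subset ?_
  rw [minGens_veronese]
  exact fun u hu i _ => hu.2 i

theorem minGens_veronese_subset {d : ℕ} {a b : Mon n}
    (hsub : veronese n d a ⊆ veronese n d b) :
    minGens (veronese n d a) ⊆ minGens (veronese n d b) := by
  rw [minGens_veronese, minGens_veronese]
  rintro u ⟨hdeg, hcap⟩
  obtain ⟨u', hd', hc', hle'⟩ := hsub ⟨u, hdeg, hcap, le_rfl⟩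
  obtain rfl : u' = u := eq_of_le_of_degree_le hle' (by rw [hd', hdeg])
  exact ⟨hdeg, hc'⟩

/-- Truncated subtraction makes each summand the positive part `(u i - a i)₊`. -/
def excess (a u : Mon n) : ℕ := ∑ i, (u i - a i)

theorem excess_eq_zero_iff {a u : Mon n} : excess a u = 0 ↔ u ≤ a := by
  simp [excess, Finset.sum_eq_zero_iff, Pi.le_def, Nat.sub_eq_zero_iff_le]

theorem excess_exch_lt {a v : Mon n} {i j : Fin n} (hi : a i < v i) (hj : v j < a j) :
    excess a (exch v i j) < excess a v := by
  have hij : i ≠ j := by rintro rfl; omega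
  have := sum_exch (fun k x => x - a k) (v := v) hij
  simp only [excess] at this ⊢
  omega

theorem excess_exch_eq {a v : Mon n} {i j : Fin n} (hij : i ≠ j) (hi : a i < v i)
    (hj : a j ≤ v j) : excess a (exch v i j) = excess a v := by
  have := sum_exch (fun k x => x - a k) (v := v) hij
  simp only [excess] at this ⊢
  omega

theorem toLex_lt_exch {v : Mon n} {i j : Fin n} (hji : j < i) :
    toLex v < toLex (exch v i j) :=
  ⟨j, fun k hk => by simp [exch, hk.ne, (hk.trans hji).ne], by simp [exch, hji.ne]⟩

theorem exists_lt_of_excess_lt {a u v : Mon n} (hdeg : degree u = degree v)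
    (hlt : excess a u < excess a v) : ∃ k, v k < u k ∧ v k < a k := by
  by_contra! h
  have hs : ∑ i, (u i - v i) + degree v = ∑ i, (v i - u i) + degree u := by
    simp only [degree, ← Finset.sum_add_distrib]
    exact Finset.sum_congr rfl fun i _ => by omega
  have key : ∀ i ∈ Finset.univ, (v i - a i) + (u i - v i) ≤ (u i - a i) + (v i - u i) := by
    intro i _
    rcases lt_or_ge (v i) (u i) with hvu | hvu
    · have := h i hvu; omega
    · omega
  have hsum := Finset.sum_le_sum key
  simp only [Finset.sum_add_distrib] at hsum
  simp only [excess] at hlt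
  omega

theorem exists_gt_of_excess_eq {a u v : Mon n}
    (hexc : excess a u = excess a v) {p : Fin n} (hagree : ∀ j < p, v j = u j)
    (hp : v p < u p) (hpa : a p ≤ v p) : ∃ t, p < t ∧ a t < v t := by
  by_contra! h
  have : excess a v < excess a u := by
    refine Finset.sum_lt_sum (fun i _ => ?_) ⟨p, Finset.mem_univ p, by omega⟩
    rcases lt_trichotomy i p with hip | rfl | hpi
    · rw [hagree i hip]
    · omega
    · have := h i hpi; omega
  omega

def excessKey (a u : Mon n) : ℕ ×ₗ (Lex (Mon n))ᵒᵈ :=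
  toLex (excess a u, OrderDual.toDual (toLex u))

theorem excessKey_lt_iff {a u v : Mon n} :
    excessKey a u < excessKey a v ↔
      excess a u < excess a v ∨ (excess a u = excess a v ∧ toLex v < toLex u) := by
  simp [excessKey, Prod.Lex.lt_iff]

theorem excessKey_injective (a : Mon n) : Function.Injective (excessKey a) := fun u v h => by
  simpa [excessKey] using congrArg (fun p => (ofLex p).2) h

theorem exists_exch_excessKey_lt {a u v : Mon n} (hdeg : degree u = degree v) (hv : ¬ v ≤ a)
    (hlt : excessKey a u < excessKey a v) :
    ∃ k t, k ≠ t ∧ v k < u k ∧ a t < v t ∧ excessKey a (exch v t k) < excessKey a v := by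
  obtain ⟨t₀, ht₀⟩ : ∃ t, a t < v t := by simpa [Pi.le_def] using hv
  by_cases hdrop : ∃ k, v k < u k ∧ v k < a k
  · obtain ⟨k, hku, hka⟩ := hdrop
    have hkt : k ≠ t₀ := by rintro rfl; omega
    exact ⟨k, t₀, hkt, hku, ht₀, excessKey_lt_iff.2 (Or.inl (excess_exch_lt ht₀ hka))⟩
  · obtain ⟨hexc, hlex⟩ : excess a u = excess a v ∧ toLex v < toLex u := by
      refine (excessKey_lt_iff.1 hlt).resolve_left fun h => hdrop ?_
      exact exists_lt_of_excess_lt hdeg h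
    obtain ⟨p, hagree, hp⟩ := hlex
    have hpa : a p ≤ v p := not_lt.1 fun h => hdrop ⟨p, hp, h⟩
    obtain ⟨t, hpt, ht⟩ := exists_gt_of_excess_eq hexc hagree hp hpa
    exact ⟨p, t, hpt.ne, hp, ht, excessKey_lt_iff.2
      (Or.inr ⟨excess_exch_eq hpt.ne' ht hpa, toLex_lt_exch hpt⟩)⟩

theorem veronese_colon_excessKey {d : ℕ} {a b v w : Mon n} (hvd : degree v = d)
    (hvb : v ≤ b) (hva : ¬ v ≤ a)
    (hw : w + v ∈ genBy {u | u ∈ minGens (veronese n d b) ∧ excessKey a u < excessKey a v}) :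
    ∃ k, 1 ≤ w k ∧ Pi.single k 1 + v ∈
      genBy {u | u ∈ minGens (veronese n d b) ∧ excessKey a u < excessKey a v} := by
  obtain ⟨u, ⟨hu, hlt⟩, hle⟩ := hw
  rw [minGens_veronese] at hu ⊢
  obtain ⟨hud, hub⟩ := hu
  obtain ⟨k, t, hkt, hku, ht, hkey⟩ := exists_exch_excessKey_lt (hud.trans hvd.symm) hva hlt
  have hwk : 1 ≤ w k := by have := hle k; simp only [Pi.add_apply] at this; omega
  refine ⟨k, hwk, exch v t k, ⟨⟨?_, fun i => ?_⟩, hkey⟩, exch_le_single_add v t k⟩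
  · rw [degree_exch hkt.symm (by omega), hvd]
  · have hvi : v i ≤ b i := hvb i
    have huk : u k ≤ b k := hub k
    simp only [exch]
    split_ifs with h₁ h₂
    · omega
    · subst h₂; omega
    · exact hvi

end VeroneseType

theorem stmt_15_general (n d : ℕ) (a b : Fin n → ℕ)
    (hsub : veronese n d a ⊆ veronese n d b) :
    ExtendsByLinearQuotients (veronese n d a) (veronese n d b) := by
  refine extendsByLinearQuotients_of_key (excessKey a) (excessKey_injective a) hsub
    (minGens_veronese_subset hsub) (finite_minGens_veronese d b).sdiff ?_ ?_
  · rintro u hu v ⟨hvL, hv⟩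
    rw [minGens_veronese] at hu hvL hv
    refine excessKey_lt_iff.2 (Or.inl ?_)
    rw [excess_eq_zero_iff.2 hu.2]
    exact Nat.pos_of_ne_zero fun h => hv ⟨hvL.1, excess_eq_zero_iff.1 h⟩
  · rintro v ⟨hvb, hva⟩ w hw
    rw [minGens_veronese] at hvb hva
    exact veronese_colon_excessKey hvb.1 hvb.2 (fun h => hva ⟨hvb.1, h⟩) hw

/-- if `J = I_{(d;a)} ⊆ L = I_{(d;b)}` are Veronese type ideals of the
same degree, then `J` can be extended by linear quotients to `L`. -/
theorem stmt_15 (n d : ℕ) (a b : Fin n → ℕ) (hd : 0 < d)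
    (ha : ∀ i, 0 < a i) (hb : ∀ i, 0 < b i)
    (hsub : veronese n d a ⊆ veronese n d b) :
    ExtendsByLinearQuotients (veronese n d a) (veronese n d b) :=
  stmt_15_general n d a b hsub
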